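/- Let β satisfy the Lamé equations, and let X_i : ℝ^N → ℝ^N satisfy both ∂X_j/∂u_i = β_{ji}X_i (i≠j) and ∂X_i/∂u_i = −Σ_{k≠i}X_kβ_{ki}. Then the quantity X*_i := (∂X_i/∂u_i + Σ_{k≠i}X_kβ_{ki})ᵀ vanishes identically, and hence the vectorial Ribaucour transform X̂_i := X_i − Ω(X,ξ*)Ω(ξ,ξ*)^{-1}ξ_i, with Ω(X,ξ*) chosen so that ∂Ω(X,ξ*)/∂u_i = X_i⊗ξ*_i and the constraint Ω(ξ,X*) = 0, satisfies ∂X̂_i/∂u_i = −Σ_{k≠i}X̂_kβ̂_{ki} where β̂_{ki} = β_{ki} − ⟨ξ*_i, Ω(ξ,ξ*)^{-1}ξ_k⟩. -/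

import Mathlib

open scoped BigOperators

/-- Partial derivative of a scalar function on `ℝ^N` in the `i`-th coordinate direction. -/
noncomputable def pd {N : ℕ} (i : Fin N) (f : (Fin N → ℝ) → ℝ) (u : Fin N → ℝ) : ℝ :=
  fderiv ℝ f u (Pi.single i 1)

lemma pd_const {N : ℕ} (i : Fin N) (c : ℝ) (u : Fin N → ℝ) :
    pd i (fun _ => c) u = 0 := by
  simp [pd]

lemma pd_mul {N : ℕ} (i : Fin N) {f g : (Fin N → ℝ) → ℝ} {u : Fin N → ℝ}
    (hf : DifferentiableAt ℝ f u) (hg : DifferentiableAt ℝ g u) :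
    pd i (fun v => f v * g v) u = pd i f u * g u + f u * pd i g u := by
  unfold pd
  rw [fderiv_fun_mul hf hg]
  simp; ring

lemma pd_sub {N : ℕ} (i : Fin N) {f g : (Fin N → ℝ) → ℝ} {u : Fin N → ℝ}
    (hf : DifferentiableAt ℝ f u) (hg : DifferentiableAt ℝ g u) :
    pd i (fun v => f v - g v) u = pd i f u - pd i g u := by
  unfold pd
  rw [fderiv_fun_sub hf hg]
  simp

lemma pd_sum {N : ℕ} (i : Fin N) {κ : Type*} (s : Finset κ)
    {f : κ → (Fin N → ℝ) → ℝ} {u : Fin N → ℝ}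
    (hf : ∀ j ∈ s, DifferentiableAt ℝ (f j) u) :
    pd i (fun v => ∑ j ∈ s, f j v) u = ∑ j ∈ s, pd i (f j) u := by
  unfold pd
  rw [fderiv_fun_sum hf]
  simp

/-- reshape a double sum -/
lemma reshape {α β : Type*} [Fintype α] [Fintype β]
    (f : α → ℝ) (g : α → β → ℝ) (h : β → ℝ) :
    ∑ b, ∑ c, f b * g b c * h c = ∑ c, (∑ b, f b * g b c) * h c := by
  rw [Finset.sum_comm]
  exact Finset.sum_congr rfl fun c _ => (Finset.sum_mul _ _ _).symm

/-- key contraction identity -/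
lemma key1 {M N : ℕ} (W A : Fin M → Fin M → ℝ) (ξv : Fin N → Fin M → ℝ) (xj ys : Fin M → ℝ)
    (hinv : ∀ a b, ∑ c, A a c * W c b = if a = b then 1 else 0)
    (hcon : ∀ a b, W a b + W b a = ∑ k, ξv k a * ξv k b) :
    ∑ k, (∑ c, (∑ b, xj b * A b c) * ξv k c) * (∑ c, (∑ b, ys b * A b c) * ξv k c)
      = (∑ c, (∑ b, ys b * A b c) * xj c) + (∑ c, (∑ b, xj b * A b c) * ys c) := by
  set p : Fin M → ℝ := fun c => ∑ b, xj b * A b c with hp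
  set q : Fin M → ℝ := fun c => ∑ b, ys b * A b c with hq
  have hpW : ∀ e, ∑ c, p c * W c e = xj e := by
    intro e
    have : ∀ c, p c * W c e = ∑ b, xj b * (A b c * W c e) := by
      intro c; rw [hp]; rw [Finset.sum_mul]; exact Finset.sum_congr rfl fun b _ => by ring
    rw [Finset.sum_congr rfl fun c _ => this c, Finset.sum_comm]
    have : ∀ b, ∑ c, xj b * (A b c * W c e) = xj b * (if b = e then 1 else 0) := by
      intro b; rw [← Finset.mul_sum, hinv]
    rw [Finset.sum_congr rfl fun b _ => this b]
    simp
  have hqW : ∀ c, ∑ e, q e * W e c = ys c := by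
    intro c
    have : ∀ e, q e * W e c = ∑ d, ys d * (A d e * W e c) := by
      intro e; rw [hq]; rw [Finset.sum_mul]; exact Finset.sum_congr rfl fun d _ => by ring
    rw [Finset.sum_congr rfl fun e _ => this e, Finset.sum_comm]
    have : ∀ d, ∑ e, ys d * (A d e * W e c) = ys d * (if d = c then 1 else 0) := by
      intro d; rw [← Finset.mul_sum, hinv]
    rw [Finset.sum_congr rfl fun d _ => this d]
    simp
  calc ∑ k, (∑ c, p c * ξv k c) * (∑ e, q e * ξv k e)
      = ∑ k, ∑ c, ∑ e, p c * q e * (ξv k c * ξv k e) := by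
        refine Finset.sum_congr rfl fun k _ => ?_
        rw [Finset.sum_mul_sum]
        exact Finset.sum_congr rfl fun c _ => Finset.sum_congr rfl fun e _ => by ring
    _ = ∑ c, ∑ e, p c * q e * (∑ k, ξv k c * ξv k e) := by
        rw [Finset.sum_comm]
        refine Finset.sum_congr rfl fun c _ => ?_
        rw [Finset.sum_comm]
        exact Finset.sum_congr rfl fun e _ => (Finset.mul_sum _ _ _).symm
    _ = ∑ c, ∑ e, (p c * W c e * q e + q e * W e c * p c) := by
        refine Finset.sum_congr rfl fun c _ => Finset.sum_congr rfl fun e _ => ?_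
        rw [← hcon]; ring
    _ = (∑ c, (∑ b, ys b * A b c) * xj c) + (∑ c, (∑ b, xj b * A b c) * ys c) := by
        rw [Finset.sum_congr rfl fun c _ => Finset.sum_add_distrib]
        rw [Finset.sum_add_distrib]
        congr 1
        · calc ∑ c, ∑ e, p c * W c e * q e
              = ∑ e, (∑ c, p c * W c e) * q e := reshape p W q
            _ = ∑ e, xj e * q e := Finset.sum_congr rfl fun e _ => by rw [hpW]
            _ = ∑ c, (∑ b, ys b * A b c) * xj c :=
                Finset.sum_congr rfl fun e _ => mul_comm _ _
        · calc ∑ c, ∑ e, q e * W e c * p c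
              = ∑ c, (∑ e, q e * W e c) * p c :=
                Finset.sum_congr rfl fun c _ => (Finset.sum_mul _ _ _).symm
            _ = ∑ c, (∑ b, xj b * A b c) * ys c := by
                refine Finset.sum_congr rfl fun c _ => ?_
                rw [hqW]; exact mul_comm _ _


theorem ribaucour_transforms_diagonal_system
    {N M : ℕ}
    (β : Fin N → Fin N → (Fin N → ℝ) → ℝ)
    (X : Fin N → (Fin N → ℝ) → Fin N → ℝ)
    (ξ : Fin N → (Fin N → ℝ) → Fin M → ℝ)
    (ξs : Fin N → (Fin N → ℝ) → Fin M → ℝ)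
    (Ω Ωinv : (Fin N → ℝ) → Fin M → Fin M → ℝ)
    (ΩX : (Fin N → ℝ) → Fin N → Fin M → ℝ)
    (βh : Fin N → Fin N → (Fin N → ℝ) → ℝ)
    (Xh : Fin N → (Fin N → ℝ) → Fin N → ℝ)
    (hβ : ∀ i j, i ≠ j → ContDiff ℝ (⊤ : ℕ∞) (β i j))
    (hXsm : ∀ i a, ContDiff ℝ (⊤ : ℕ∞) (fun u => X i u a))
    (hξ : ∀ i a, ContDiff ℝ (⊤ : ℕ∞) (fun u => ξ i u a))
    (hΩsm : ∀ a b, ContDiff ℝ (⊤ : ℕ∞) (fun u => Ω u a b))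
    (hΩinvsm : ∀ a b, ContDiff ℝ (⊤ : ℕ∞) (fun u => Ωinv u a b))
    (hΩXsm : ∀ a b, ContDiff ℝ (⊤ : ℕ∞) (fun u => ΩX u a b))
    -- Lamé equations
    (hLame1 : ∀ i j k, i ≠ j → j ≠ k → i ≠ k → ∀ u : Fin N → ℝ,
      pd k (β i j) u = β i k u * β k j u)
    (hLame2 : ∀ i j, i ≠ j → ∀ u : Fin N → ℝ,
      pd i (β i j) u + pd j (β j i) u
        + ∑ k ∈ Finset.univ.filter (fun k => k ≠ i ∧ k ≠ j), β k i u * β k j u = 0)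
    -- full linear system for the tangent vectors X
    (hoff : ∀ i j, i ≠ j → ∀ (u : Fin N → ℝ) (a : Fin N),
      pd i (fun v => X j v a) u = β j i u * X i u a)
    (hdiag : ∀ i (u : Fin N → ℝ) (a : Fin N),
      pd i (fun v => X i v a) u
        = -∑ k ∈ Finset.univ.filter (fun k => k ≠ i), X k u a * β k i u)
    -- Ribaucour data
    (hdirect : ∀ i j, i ≠ j → ∀ (u : Fin N → ℝ) (a : Fin M),
      pd i (fun v => ξ j v a) u = β j i u * ξ i u a)
    (hξs : ∀ i (u : Fin N → ℝ) (a : Fin M),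
      ξs i u a = pd i (fun v => ξ i v a) u
        + ∑ k ∈ Finset.univ.filter (fun k => k ≠ i), ξ k u a * β k i u)
    (hΩ : ∀ i (u : Fin N → ℝ) (a b : Fin M),
      pd i (fun v => Ω v a b) u = ξ i u a * ξs i u b)
    (hconstr : ∀ (u : Fin N → ℝ) (a b : Fin M),
      Ω u a b + Ω u b a = ∑ k, ξ k u a * ξ k u b)
    (hinv₁ : ∀ (u : Fin N → ℝ) (a b : Fin M),
      ∑ c, Ω u a c * Ωinv u c b = if a = b then 1 else 0)
    (hinv₂ : ∀ (u : Fin N → ℝ) (a b : Fin M),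
      ∑ c, Ωinv u a c * Ω u c b = if a = b then 1 else 0)
    -- potential Ω(X,ξ*) with the choice Ω(ξ,X*) = 0, i.e. Ω(X,ξ*)ᵀ = Σ_k ξ_k ⊗ X_kᵀ
    (hΩX : ∀ i (u : Fin N → ℝ) (b : Fin N) (a : Fin M),
      pd i (fun v => ΩX v b a) u = X i u b * ξs i u a)
    (hΩXconstr : ∀ (u : Fin N → ℝ) (a : Fin M) (b : Fin N),
      ΩX u b a = ∑ k, ξ k u a * X k u b)
    -- transformed quantities
    (hβh : ∀ k i (u : Fin N → ℝ),
      βh k i u = β k i u - ∑ a, ∑ b, ξs i u a * Ωinv u a b * ξ k u b)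
    (hXh : ∀ i (u : Fin N → ℝ) (a : Fin N),
      Xh i u a = X i u a - ∑ b, ∑ c, ΩX u a b * Ωinv u b c * ξ i u c) :
    -- X* vanishes identically, and the transformed vectors satisfy the diagonal system
    (∀ i (u : Fin N → ℝ) (a : Fin N),
        pd i (fun v => X i v a) u
          + ∑ k ∈ Finset.univ.filter (fun k => k ≠ i), X k u a * β k i u = 0)
    ∧ (∀ i (u : Fin N → ℝ) (a : Fin N),
        pd i (fun v => Xh i v a) u
          = -∑ k ∈ Finset.univ.filter (fun k => k ≠ i), Xh k u a * βh k i u) := by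
  -- differentiability of the atoms
  have dX : ∀ j b (w : Fin N → ℝ), DifferentiableAt ℝ (fun v => X j v b) w :=
    fun j b w => ((hXsm j b).differentiable (by simp)).differentiableAt
  have dξ : ∀ j b (w : Fin N → ℝ), DifferentiableAt ℝ (fun v => ξ j v b) w :=
    fun j b w => ((hξ j b).differentiable (by simp)).differentiableAt
  have dΩ : ∀ b c (w : Fin N → ℝ), DifferentiableAt ℝ (fun v => Ω v b c) w :=
    fun b c w => ((hΩsm b c).differentiable (by simp)).differentiableAt
  have dΩinv : ∀ b c (w : Fin N → ℝ), DifferentiableAt ℝ (fun v => Ωinv v b c) w :=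
    fun b c w => ((hΩinvsm b c).differentiable (by simp)).differentiableAt
  have dΩX : ∀ b c (w : Fin N → ℝ), DifferentiableAt ℝ (fun v => ΩX v b c) w :=
    fun b c w => ((hΩXsm b c).differentiable (by simp)).differentiableAt
  -- derivative of the inverse matrix
  have hpdInv : ∀ (i : Fin N) (u : Fin N → ℝ) (b c : Fin M),
      pd i (fun v => Ωinv v b c) u
        = -((∑ d, Ωinv u b d * ξ i u d) * (∑ e, ξs i u e * Ωinv u e c)) := by
    intro i u b c
    have hA : ∀ e : Fin M, ∑ d, pd i (fun v => Ωinv v b d) u * Ω u d e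
        = -∑ d, Ωinv u b d * (ξ i u d * ξs i u e) := by
      intro e
      have hfun : (fun v => ∑ d, Ωinv v b d * Ω v d e) = (fun _ => if b = e then (1:ℝ) else 0) :=
        funext fun v => hinv₂ v b e
      have h1 : pd i (fun v => ∑ d, Ωinv v b d * Ω v d e) u
          = ∑ d, pd i (fun v => Ωinv v b d * Ω v d e) u :=
        pd_sum i Finset.univ (fun d _ => (dΩinv b d u).mul (dΩ d e u))
      rw [hfun, pd_const] at h1
      have h2 : ∀ d : Fin M, pd i (fun v => Ωinv v b d * Ω v d e) u
          = pd i (fun v => Ωinv v b d) u * Ω u d e + Ωinv u b d * (ξ i u d * ξs i u e) := by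
        intro d
        rw [pd_mul i (dΩinv b d u) (dΩ d e u), hΩ i u d e]
      rw [Finset.sum_congr rfl fun d _ => h2 d, Finset.sum_add_distrib] at h1
      linarith
    calc pd i (fun v => Ωinv v b c) u
        = ∑ d, pd i (fun v => Ωinv v b d) u * (if d = c then (1:ℝ) else 0) := by
          simp
      _ = ∑ d, pd i (fun v => Ωinv v b d) u * (∑ e, Ω u d e * Ωinv u e c) :=
          Finset.sum_congr rfl fun d _ => by rw [hinv₁ u d c]
      _ = ∑ d, ∑ e, pd i (fun v => Ωinv v b d) u * Ω u d e * Ωinv u e c := by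
          refine Finset.sum_congr rfl fun d _ => ?_
          rw [Finset.mul_sum]
          exact Finset.sum_congr rfl fun e _ => by ring
      _ = ∑ e, (∑ d, pd i (fun v => Ωinv v b d) u * Ω u d e) * Ωinv u e c :=
          reshape _ _ _
      _ = ∑ e, (-∑ d, Ωinv u b d * (ξ i u d * ξs i u e)) * Ωinv u e c :=
          Finset.sum_congr rfl fun e _ => by rw [hA e]
      _ = ∑ e, ∑ d, -(Ωinv u b d * ξ i u d * (ξs i u e * Ωinv u e c)) := by
          refine Finset.sum_congr rfl fun e _ => ?_
          rw [neg_mul, Finset.sum_mul, Finset.sum_neg_distrib]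
          congr 1
          exact Finset.sum_congr rfl fun d _ => by ring
      _ = -∑ e, ∑ d, Ωinv u b d * ξ i u d * (ξs i u e * Ωinv u e c) := by
          simp only [Finset.sum_neg_distrib]
      _ = -∑ d, ∑ e, Ωinv u b d * ξ i u d * (ξs i u e * Ωinv u e c) := by
          rw [Finset.sum_comm]
      _ = -((∑ d, Ωinv u b d * ξ i u d) * (∑ e, ξs i u e * Ωinv u e c)) := by
          rw [Finset.sum_mul_sum]
  constructor
  · intro i u a
    rw [hdiag]; ring
  · intro i u a
    have hsplit : ∀ f : Fin N → ℝ,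
        ∑ k ∈ Finset.univ.filter (fun k => k ≠ i), f k = (∑ k, f k) - f i := by
      intro f
      rw [Finset.filter_ne', Finset.sum_erase_eq_sub (Finset.mem_univ i)]
    have hpdξ : ∀ c : Fin M, pd i (fun v => ξ i v c) u
        = ξs i u c - ∑ k ∈ Finset.univ.filter (fun k => k ≠ i), ξ k u c * β k i u := by
      intro c; have := hξs i u c; linarith
    -- the first factor in terms of the constraint
    have hpc : ∀ c : Fin M, (∑ b, ΩX u a b * Ωinv u b c)
        = ∑ j, X j u a * (∑ b, ξ j u b * Ωinv u b c) := by
      intro c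
      calc ∑ b, ΩX u a b * Ωinv u b c
          = ∑ b, ∑ j, X j u a * (ξ j u b * Ωinv u b c) := by
            refine Finset.sum_congr rfl fun b _ => ?_
            rw [hΩXconstr u b a, Finset.sum_mul]
            exact Finset.sum_congr rfl fun j _ => by ring
        _ = ∑ j, ∑ b, X j u a * (ξ j u b * Ωinv u b c) := Finset.sum_comm
        _ = ∑ j, X j u a * (∑ b, ξ j u b * Ωinv u b c) :=
            Finset.sum_congr rfl fun j _ => (Finset.mul_sum _ _ _).symm
    -- the key identity
    have hKEY : ∑ k, (∑ c, (∑ b, ΩX u a b * Ωinv u b c) * ξ k u c)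
          * (∑ c, (∑ b, ξs i u b * Ωinv u b c) * ξ k u c)
        = (∑ k, X k u a * (∑ c, (∑ b, ξs i u b * Ωinv u b c) * ξ k u c))
          + (∑ c, (∑ b, ΩX u a b * Ωinv u b c) * ξs i u c) := by
      have hk1 : ∀ j : Fin N,
          ∑ k, (∑ c, (∑ b, ξ j u b * Ωinv u b c) * ξ k u c)
              * (∑ c, (∑ b, ξs i u b * Ωinv u b c) * ξ k u c)
            = (∑ c, (∑ b, ξs i u b * Ωinv u b c) * ξ j u c)
              + (∑ c, (∑ b, ξ j u b * Ωinv u b c) * ξs i u c) :=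
        fun j => key1 (Ω u) (Ωinv u) (fun k => ξ k u) (ξ j u) (ξs i u)
          (fun a b => hinv₂ u a b) (fun a b => hconstr u a b)
      calc ∑ k, (∑ c, (∑ b, ΩX u a b * Ωinv u b c) * ξ k u c)
            * (∑ c, (∑ b, ξs i u b * Ωinv u b c) * ξ k u c)
          = ∑ k, ∑ j, X j u a
              * ((∑ c, (∑ b, ξ j u b * Ωinv u b c) * ξ k u c)
                * (∑ c, (∑ b, ξs i u b * Ωinv u b c) * ξ k u c)) := by
            refine Finset.sum_congr rfl fun k _ => ?_
            have : (∑ c, (∑ b, ΩX u a b * Ωinv u b c) * ξ k u c)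
                = ∑ j, X j u a * (∑ c, (∑ b, ξ j u b * Ωinv u b c) * ξ k u c) := by
              calc ∑ c, (∑ b, ΩX u a b * Ωinv u b c) * ξ k u c
                  = ∑ c, ∑ j, X j u a * ((∑ b, ξ j u b * Ωinv u b c) * ξ k u c) := by
                    refine Finset.sum_congr rfl fun c _ => ?_
                    rw [hpc c, Finset.sum_mul]
                    exact Finset.sum_congr rfl fun j _ => by ring
                _ = ∑ j, ∑ c, X j u a * ((∑ b, ξ j u b * Ωinv u b c) * ξ k u c) :=
                    Finset.sum_comm
                _ = ∑ j, X j u a * (∑ c, (∑ b, ξ j u b * Ωinv u b c) * ξ k u c) :=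
                    Finset.sum_congr rfl fun j _ => (Finset.mul_sum _ _ _).symm
            rw [this, Finset.sum_mul]
            exact Finset.sum_congr rfl fun j _ => by ring
        _ = ∑ j, X j u a
              * (∑ k, (∑ c, (∑ b, ξ j u b * Ωinv u b c) * ξ k u c)
                * (∑ c, (∑ b, ξs i u b * Ωinv u b c) * ξ k u c)) := by
            rw [Finset.sum_comm]
            exact Finset.sum_congr rfl fun j _ => (Finset.mul_sum _ _ _).symm
        _ = ∑ j, X j u a
              * ((∑ c, (∑ b, ξs i u b * Ωinv u b c) * ξ j u c)
                + (∑ c, (∑ b, ξ j u b * Ωinv u b c) * ξs i u c)) :=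
            Finset.sum_congr rfl fun j _ => by rw [hk1 j]
        _ = (∑ j, X j u a * (∑ c, (∑ b, ξs i u b * Ωinv u b c) * ξ j u c))
              + ∑ j, X j u a * (∑ c, (∑ b, ξ j u b * Ωinv u b c) * ξs i u c) := by
            rw [← Finset.sum_add_distrib]
            exact Finset.sum_congr rfl fun j _ => by ring
        _ = (∑ k, X k u a * (∑ c, (∑ b, ξs i u b * Ωinv u b c) * ξ k u c))
              + (∑ c, (∑ b, ΩX u a b * Ωinv u b c) * ξs i u c) := by
            congr 1
            calc ∑ j, X j u a * (∑ c, (∑ b, ξ j u b * Ωinv u b c) * ξs i u c)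
                = ∑ j, ∑ c, X j u a * ((∑ b, ξ j u b * Ωinv u b c) * ξs i u c) :=
                  Finset.sum_congr rfl fun j _ => Finset.mul_sum _ _ _
              _ = ∑ c, ∑ j, X j u a * ((∑ b, ξ j u b * Ωinv u b c) * ξs i u c) :=
                  Finset.sum_comm
              _ = ∑ c, (∑ j, X j u a * (∑ b, ξ j u b * Ωinv u b c)) * ξs i u c := by
                  refine Finset.sum_congr rfl fun c _ => ?_
                  rw [Finset.sum_mul]
                  exact Finset.sum_congr rfl fun j _ => by ring
              _ = ∑ c, (∑ b, ΩX u a b * Ωinv u b c) * ξs i u c :=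
                  Finset.sum_congr rfl fun c _ => by rw [← hpc c]
    -- differentiability of the correction term
    have hd2 : ∀ (b c) (v : Fin N → ℝ),
        DifferentiableAt ℝ (fun v => ΩX v a b * Ωinv v b c * ξ i v c) v :=
      fun b c v => ((dΩX a b v).mul (dΩinv b c v)).mul (dξ i c v)
    have hd1 : ∀ (b) (v : Fin N → ℝ),
        DifferentiableAt ℝ (fun v => ∑ c, ΩX v a b * Ωinv v b c * ξ i v c) v :=
      fun b v => DifferentiableAt.fun_sum (fun c _ => hd2 b c v)
    -- derivative of the correction term, summand form
    have hpdF : pd i (fun v => ∑ b, ∑ c, ΩX v a b * Ωinv v b c * ξ i v c) u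
        = ∑ b, ∑ c, (X i u a * ξs i u b * Ωinv u b c * ξ i u c
            - ΩX u a b * ((∑ d, Ωinv u b d * ξ i u d) * ((∑ e, ξs i u e * Ωinv u e c) * ξ i u c))
            + ΩX u a b * Ωinv u b c * ξs i u c
            - ΩX u a b * Ωinv u b c
              * (∑ k ∈ Finset.univ.filter (fun k => k ≠ i), ξ k u c * β k i u)) := by
      rw [pd_sum i Finset.univ (fun b _ => hd1 b u)]
      refine Finset.sum_congr rfl fun b _ => ?_
      rw [pd_sum i Finset.univ (fun c _ => hd2 b c u)]
      refine Finset.sum_congr rfl fun c _ => ?_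
      rw [pd_mul i ((dΩX a b u).fun_mul (dΩinv b c u)) (dξ i c u),
        pd_mul i (dΩX a b u) (dΩinv b c u), hΩX i u a b, hpdInv i u b c, hpdξ c]
      ring
    -- the four pieces
    have piece1 : ∑ b, ∑ c, X i u a * ξs i u b * Ωinv u b c * ξ i u c
        = X i u a * (∑ c, (∑ b, ξs i u b * Ωinv u b c) * ξ i u c) := by
      calc ∑ b, ∑ c, X i u a * ξs i u b * Ωinv u b c * ξ i u c
          = ∑ b, ∑ c, X i u a * (ξs i u b * Ωinv u b c * ξ i u c) :=
            Finset.sum_congr rfl fun b _ => Finset.sum_congr rfl fun c _ => by ring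
        _ = ∑ b, X i u a * (∑ c, ξs i u b * Ωinv u b c * ξ i u c) :=
            Finset.sum_congr rfl fun b _ => (Finset.mul_sum _ _ _).symm
        _ = X i u a * (∑ b, ∑ c, ξs i u b * Ωinv u b c * ξ i u c) :=
            (Finset.mul_sum _ _ _).symm
        _ = X i u a * (∑ c, (∑ b, ξs i u b * Ωinv u b c) * ξ i u c) := by
            rw [reshape]
    have piece2 : ∑ b, ∑ c, ΩX u a b
          * ((∑ d, Ωinv u b d * ξ i u d) * ((∑ e, ξs i u e * Ωinv u e c) * ξ i u c))
        = (∑ c, (∑ b, ΩX u a b * Ωinv u b c) * ξ i u c)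
          * (∑ c, (∑ b, ξs i u b * Ωinv u b c) * ξ i u c) := by
      calc ∑ b, ∑ c, ΩX u a b
            * ((∑ d, Ωinv u b d * ξ i u d) * ((∑ e, ξs i u e * Ωinv u e c) * ξ i u c))
          = ∑ b, ∑ c, (ΩX u a b * (∑ d, Ωinv u b d * ξ i u d))
              * ((∑ e, ξs i u e * Ωinv u e c) * ξ i u c) :=
            Finset.sum_congr rfl fun b _ => Finset.sum_congr rfl fun c _ => by ring
        _ = (∑ b, ΩX u a b * (∑ d, Ωinv u b d * ξ i u d))
              * (∑ c, (∑ e, ξs i u e * Ωinv u e c) * ξ i u c) :=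
            (Finset.sum_mul_sum _ _ _ _).symm
        _ = (∑ c, (∑ b, ΩX u a b * Ωinv u b c) * ξ i u c)
              * (∑ c, (∑ b, ξs i u b * Ωinv u b c) * ξ i u c) := by
            congr 1
            calc ∑ b, ΩX u a b * (∑ d, Ωinv u b d * ξ i u d)
                = ∑ b, ∑ d, ΩX u a b * Ωinv u b d * ξ i u d := by
                  refine Finset.sum_congr rfl fun b _ => ?_
                  rw [Finset.mul_sum]
                  exact Finset.sum_congr rfl fun d _ => by ring
              _ = ∑ d, (∑ b, ΩX u a b * Ωinv u b d) * ξ i u d := reshape _ _ _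
    have piece3 : ∑ b, ∑ c, ΩX u a b * Ωinv u b c * ξs i u c
        = ∑ c, (∑ b, ΩX u a b * Ωinv u b c) * ξs i u c := reshape _ _ _
    have piece4 : ∑ b, ∑ c, ΩX u a b * Ωinv u b c
          * (∑ k ∈ Finset.univ.filter (fun k => k ≠ i), ξ k u c * β k i u)
        = ∑ k ∈ Finset.univ.filter (fun k => k ≠ i),
            (∑ c, (∑ b, ΩX u a b * Ωinv u b c) * ξ k u c) * β k i u := by
      calc ∑ b, ∑ c, ΩX u a b * Ωinv u b c
            * (∑ k ∈ Finset.univ.filter (fun k => k ≠ i), ξ k u c * β k i u)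
          = ∑ c, (∑ b, ΩX u a b * Ωinv u b c)
              * (∑ k ∈ Finset.univ.filter (fun k => k ≠ i), ξ k u c * β k i u) :=
            reshape _ _ _
        _ = ∑ c, ∑ k ∈ Finset.univ.filter (fun k => k ≠ i),
              (∑ b, ΩX u a b * Ωinv u b c) * (ξ k u c * β k i u) :=
            Finset.sum_congr rfl fun c _ => Finset.mul_sum _ _ _
        _ = ∑ k ∈ Finset.univ.filter (fun k => k ≠ i), ∑ c,
              (∑ b, ΩX u a b * Ωinv u b c) * (ξ k u c * β k i u) := Finset.sum_comm
        _ = ∑ k ∈ Finset.univ.filter (fun k => k ≠ i),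
              (∑ c, (∑ b, ΩX u a b * Ωinv u b c) * ξ k u c) * β k i u := by
            refine Finset.sum_congr rfl fun k _ => ?_
            rw [Finset.sum_mul]
            exact Finset.sum_congr rfl fun c _ => by ring
    -- final derivative of the correction term
    have hpdF' : pd i (fun v => ∑ b, ∑ c, ΩX v a b * Ωinv v b c * ξ i v c) u
        = X i u a * (∑ c, (∑ b, ξs i u b * Ωinv u b c) * ξ i u c)
          - (∑ c, (∑ b, ΩX u a b * Ωinv u b c) * ξ i u c)
            * (∑ c, (∑ b, ξs i u b * Ωinv u b c) * ξ i u c)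
          + (∑ c, (∑ b, ΩX u a b * Ωinv u b c) * ξs i u c)
          - ∑ k ∈ Finset.univ.filter (fun k => k ≠ i),
              (∑ c, (∑ b, ΩX u a b * Ωinv u b c) * ξ k u c) * β k i u := by
      rw [hpdF]
      simp only [Finset.sum_add_distrib, Finset.sum_sub_distrib]
      rw [piece1, piece2, piece3, piece4]
    -- rewrite the left side
    have hXhfun : (fun v => Xh i v a)
        = fun v => X i v a - ∑ b, ∑ c, ΩX v a b * Ωinv v b c * ξ i v c :=
      funext fun v => hXh i v a
    rw [hXhfun, pd_sub i (dX i a u) (DifferentiableAt.fun_sum fun b _ => hd1 b u),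
      hdiag, hpdF']
    -- rewrite the right side
    have hXhval : ∀ k, Xh k u a
        = X k u a - ∑ c, (∑ b, ΩX u a b * Ωinv u b c) * ξ k u c := by
      intro k; rw [hXh k u a, reshape]
    have hβhval : ∀ k, βh k i u
        = β k i u - ∑ c, (∑ b, ξs i u b * Ωinv u b c) * ξ k u c := by
      intro k
      rw [hβh k i u]
      congr 1
      exact reshape _ _ _
    have hRHS : ∑ k ∈ Finset.univ.filter (fun k => k ≠ i), Xh k u a * βh k i u
        = (∑ k ∈ Finset.univ.filter (fun k => k ≠ i), X k u a * β k i u)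
          - (∑ k ∈ Finset.univ.filter (fun k => k ≠ i),
              X k u a * (∑ c, (∑ b, ξs i u b * Ωinv u b c) * ξ k u c))
          - (∑ k ∈ Finset.univ.filter (fun k => k ≠ i),
              (∑ c, (∑ b, ΩX u a b * Ωinv u b c) * ξ k u c) * β k i u)
          + (∑ k ∈ Finset.univ.filter (fun k => k ≠ i),
              (∑ c, (∑ b, ΩX u a b * Ωinv u b c) * ξ k u c)
                * (∑ c, (∑ b, ξs i u b * Ωinv u b c) * ξ k u c)) := by
      rw [← Finset.sum_sub_distrib, ← Finset.sum_sub_distrib, ← Finset.sum_add_distrib]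
      refine Finset.sum_congr rfl fun k _ => ?_
      rw [hXhval k, hβhval k]; ring
    rw [hRHS, hsplit (fun k => X k u a * β k i u),
      hsplit (fun k => X k u a * (∑ c, (∑ b, ξs i u b * Ωinv u b c) * ξ k u c)),
      hsplit (fun k => (∑ c, (∑ b, ΩX u a b * Ωinv u b c) * ξ k u c) * β k i u),
      hsplit (fun k => (∑ c, (∑ b, ΩX u a b * Ωinv u b c) * ξ k u c)
        * (∑ c, (∑ b, ξs i u b * Ωinv u b c) * ξ k u c))]
    linarith [hKEY]
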